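/- arXiv:1612.01767 — 4 statements merged into one kernel-verified Lean document; each statement's English description precedes it below -/
import Mathlib

section
/- Let A and B be nonnegative n×n real matrices. Then ‖A^{(1/2)} ∘ B^{(1/2)}‖ ≤ ρ((AᵀA)^{(1/2)} ∘ (BᵀB)^{(1/2)})^{1/2} ≤ ρ((AᵀA BᵀB)^{(1/2)} ∘ (BᵀB AᵀA)^{(1/2)})^{1/4} ≤ ρ(AᵀA BᵀB)^{1/4} = ‖ABᵀ‖^{1/2} ≤ ‖A‖^{1/2}‖B‖^{1/2}. -/
open Matrix

/-- Spectral radius of a real matrix: max modulus of its (complex) eigenvalues. -/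
noncomputable def specRad {N : Type*} [Fintype N] [DecidableEq N] (A : Matrix N N ℝ) : ℝ :=
  (spectralRadius ℂ (A.map Complex.ofReal)).toReal

/-- Operator norm induced by the Euclidean (ℓ²) norm. -/
noncomputable def l2OpNorm {N : Type*} [Fintype N] [DecidableEq N] (A : Matrix N N ℝ) : ℝ :=
  ‖Matrix.toEuclideanCLM (𝕜 := ℝ) A‖

/-- Entrywise α-th power (with the convention 0^0 = 1, as for `Real.rpow`). -/
noncomputable def hadPow {N : Type*} (A : Matrix N N ℝ) (α : ℝ) : Matrix N N ℝ :=
  fun i j => A i j ^ α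

/-!
Spectral radii are compared through Gelfand's formula `ρ(X) = lim ‖X ^ k‖ ^ (1 / k)` for the
Frobenius norm: if `(X ^ k) i j ^ 2 ≤ |(Y ^ k) i j| * |(Z ^ k) i j|` for all `k`, then
`ρ(X) ^ 2 ≤ ρ(Y) * ρ(Z)`. This makes `ρ` monotone on nonnegative matrices and, since
Cauchy–Schwarz gives `(Y^(1/2) ∘ Z^(1/2)) * (V^(1/2) ∘ W^(1/2)) ≤ (Y V)^(1/2) ∘ (Z W)^(1/2)`
entrywise (hence `(Y^(1/2) ∘ Z^(1/2)) ^ k ≤ (Y ^ k)^(1/2) ∘ (Z ^ k)^(1/2)`), it bounds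
`ρ(Y^(1/2) ∘ Z^(1/2)) ^ 2` by `ρ(Y) * ρ(Z)`. The same Cauchy–Schwarz step bounds `Gᵀ G` for
`G = A^(1/2) ∘ B^(1/2)` and `R * R` for `R = (AᵀA)^(1/2) ∘ (BᵀB)^(1/2)`; with `‖M‖ ^ 2 = ρ(Mᵀ M)`,
`ρ(R) ^ 2 ≤ ρ(R * R)` and `ρ(C D) = ρ(D C)` this yields the chain.
-/

open scoped ENNReal

theorem Real.sq_rpow_div_two {x : ℝ} (hx : 0 ≤ x) (r : ℝ) : (x ^ 2) ^ (r / 2) = x ^ r := by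
  rw [← Real.rpow_natCast, ← Real.rpow_mul hx]
  congr 1
  ring

theorem Real.rpow_le_rpow_div_two_of_sq_le {x y r : ℝ} (hx : 0 ≤ x) (hr : 0 ≤ r)
    (h : x ^ 2 ≤ y) : x ^ r ≤ y ^ (r / 2) :=
  Real.sq_rpow_div_two hx r ▸ Real.rpow_le_rpow (sq_nonneg x) h (by positivity)

theorem spectralRadius_ne_top {𝕜 A : Type*} [NontriviallyNormedField 𝕜] [NormedRing A]
    [NormedAlgebra 𝕜 A] [CompleteSpace A] (a : A) : spectralRadius 𝕜 a ≠ ⊤ :=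
  ne_top_of_le_ne_top (by finiteness) (spectrum.spectralRadius_le_pow_nnnorm_pow_one_div 𝕜 a 0)

theorem spectralRadius_sq_le_mul_of_norm_pow_sq_le {A : Type*} [NormedRing A] [NormedAlgebra ℂ A]
    [CompleteSpace A] {x y z : A} (h : ∀ k : ℕ, ‖x ^ k‖ ^ 2 ≤ ‖y ^ k‖ * ‖z ^ k‖) :
    spectralRadius ℂ x ^ 2 ≤ spectralRadius ℂ y * spectralRadius ℂ z := by
  refine le_of_tendsto_of_tendsto'
    (((ENNReal.continuous_pow 2).tendsto _).comp
      (spectrum.pow_nnnorm_pow_one_div_tendsto_nhds_spectralRadius x))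
    (ENNReal.Tendsto.mul (spectrum.pow_nnnorm_pow_one_div_tendsto_nhds_spectralRadius y)
      (.inr (spectralRadius_ne_top z))
      (spectrum.pow_nnnorm_pow_one_div_tendsto_nhds_spectralRadius z)
      (.inr (spectralRadius_ne_top y))) fun k => ?_
  have hk : (‖x ^ k‖₊ : ℝ≥0∞) ^ 2 ≤ ‖y ^ k‖₊ * ‖z ^ k‖₊ := by
    exact_mod_cast (h k : (‖x ^ k‖₊ : ℝ) ^ 2 ≤ ‖y ^ k‖₊ * ‖z ^ k‖₊)
  rw [Function.comp_apply, ← ENNReal.rpow_natCast, ← ENNReal.rpow_mul, mul_comm, ENNReal.rpow_mul,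
    ENNReal.rpow_natCast, ← ENNReal.mul_rpow_of_nonneg _ _ (by positivity)]
  gcongr

section OrderedSemiring

variable {l m n α : Type*} [Semiring α] [PartialOrder α] [IsOrderedRing α]

theorem Matrix.mul_apply_nonneg [Fintype m] {X : Matrix l m α} {Y : Matrix m n α}
    (hX : ∀ i j, 0 ≤ X i j) (hY : ∀ i j, 0 ≤ Y i j) : ∀ i j, 0 ≤ (X * Y) i j := fun i j =>
  Finset.sum_nonneg fun k _ => mul_nonneg (hX i k) (hY k j)

theorem Matrix.mul_apply_le_mul_apply [Fintype m] {X X' : Matrix l m α} {Y Y' : Matrix m n α}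
    (hX : ∀ i j, 0 ≤ X i j) (hXX' : ∀ i j, X i j ≤ X' i j)
    (hY : ∀ i j, 0 ≤ Y i j) (hYY' : ∀ i j, Y i j ≤ Y' i j) :
    ∀ i j, (X * Y) i j ≤ (X' * Y') i j := fun i j =>
  Finset.sum_le_sum fun k _ =>
    mul_le_mul (hXX' i k) (hYY' k j) (hY k j) ((hX i k).trans (hXX' i k))

theorem Matrix.pow_apply_le_pow_apply [Fintype n] [DecidableEq n] {X Y : Matrix n n α}
    (hX : ∀ i j, 0 ≤ X i j) (hXY : ∀ i j, X i j ≤ Y i j) (k : ℕ) :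
    ∀ i j, (X ^ k) i j ≤ (Y ^ k) i j := by
  induction k with
  | zero => exact fun i j => le_rfl
  | succ k ih =>
    rw [pow_succ, pow_succ]
    exact mul_apply_le_mul_apply (pow_apply_nonneg hX k) ih hX hXY

end OrderedSemiring

section Frobenius

-- Gelfand's formula holds for any Banach algebra norm; the Frobenius norm is the one that is
-- controlled by entrywise bounds.
attribute [local instance] Matrix.frobeniusSeminormedAddCommGroup
  Matrix.frobeniusNormedAddCommGroup Matrix.frobeniusNormedRing Matrix.frobeniusNormedSpace
  Matrix.frobeniusNormedAlgebra

theorem Matrix.frobenius_norm_sq_le_mul {m n α : Type*} [Fintype m] [Fintype n]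
    [SeminormedAddCommGroup α] {X Y Z : Matrix m n α}
    (h : ∀ i j, ‖X i j‖ ^ 2 ≤ ‖Y i j‖ * ‖Z i j‖) : ‖X‖ ^ 2 ≤ ‖Y‖ * ‖Z‖ := by
  simp only [frobenius_norm_def, ← Real.sqrt_eq_rpow, Real.rpow_two, ← Finset.sum_product']
  rw [Real.sq_sqrt (by positivity)]
  exact (Finset.sum_le_sum fun p _ => h p.1 p.2).trans (Real.sum_mul_le_sqrt_mul_sqrt _ _ _)

variable {N : Type*} [Fintype N] [DecidableEq N]

theorem specRad_sq_le_mul_of_pow_apply_sq_le {X Y Z : Matrix N N ℝ}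
    (h : ∀ (k : ℕ) i j, (X ^ k) i j ^ 2 ≤ |(Y ^ k) i j| * |(Z ^ k) i j|) :
    specRad X ^ 2 ≤ specRad Y * specRad Z := by
  have hle := spectralRadius_sq_le_mul_of_norm_pow_sq_le
    (x := X.map Complex.ofReal) (y := Y.map Complex.ofReal) (z := Z.map Complex.ofReal)
    fun k => by
      have map_pow (W : Matrix N N ℝ) : W.map Complex.ofReal ^ k = (W ^ k).map Complex.ofReal :=
        (W.map_pow Complex.ofRealHom k).symm
      rw [map_pow, map_pow, map_pow]
      exact frobenius_norm_sq_le_mul fun i j => by simpa using h k i j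
  rw [specRad, specRad, specRad, ← ENNReal.toReal_pow, ← ENNReal.toReal_mul]
  exact ENNReal.toReal_mono (ENNReal.mul_ne_top (spectralRadius_ne_top _)
    (spectralRadius_ne_top _)) hle

theorem specRad_sq_le_specRad_mul_self (X : Matrix N N ℝ) : specRad X ^ 2 ≤ specRad (X * X) := by
  have map_mul : (X * X).map Complex.ofReal = X.map Complex.ofReal ^ 2 :=
    (Matrix.map_mul (f := Complex.ofRealHom)).trans (sq _).symm
  rw [specRad, specRad, map_mul, ← ENNReal.toReal_pow]
  exact ENNReal.toReal_mono (spectralRadius_ne_top _)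
    (spectrum.spectralRadius_pow_le _ 2 two_ne_zero)

end Frobenius

section SpecRad

variable {N : Type*} [Fintype N] [DecidableEq N]

theorem specRad_nonneg (X : Matrix N N ℝ) : 0 ≤ specRad X := ENNReal.toReal_nonneg

theorem specRad_le_specRad_of_le {X Y : Matrix N N ℝ} (hX : ∀ i j, 0 ≤ X i j)
    (hXY : ∀ i j, X i j ≤ Y i j) : specRad X ≤ specRad Y := by
  have hY : ∀ i j, 0 ≤ Y i j := fun i j => (hX i j).trans (hXY i j)
  have hsq : specRad X ^ 2 ≤ specRad Y ^ 2 := by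
    rw [sq (specRad Y)]
    refine specRad_sq_le_mul_of_pow_apply_sq_le fun k i j => ?_
    rw [abs_of_nonneg (pow_apply_nonneg hY k i j), ← sq]
    exact pow_le_pow_left₀ (pow_apply_nonneg hX k i j) (pow_apply_le_pow_apply hX hXY k i j) 2
  exact (pow_le_pow_iff_left₀ (specRad_nonneg X) (specRad_nonneg Y) two_ne_zero).1 hsq

theorem Matrix.spectrum_mul_comm {K : Type*} [Field K] (P Q : Matrix N N K) :
    spectrum K (P * Q) = spectrum K (Q * P) := by
  ext
  simp only [mem_spectrum_iff_isRoot_charpoly, charpoly_mul_comm]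

theorem specRad_mul_comm (P Q : Matrix N N ℝ) : specRad (P * Q) = specRad (Q * P) := by
  have map_mul (X Y : Matrix N N ℝ) :
      (X * Y).map Complex.ofReal = X.map Complex.ofReal * Y.map Complex.ofReal :=
    Matrix.map_mul (f := Complex.ofRealHom)
  rw [specRad, specRad, map_mul, map_mul, spectralRadius, spectralRadius, spectrum_mul_comm]

theorem Matrix.preimage_ofReal_spectrum_map_ofReal (X : Matrix N N ℝ) :
    Complex.ofReal ⁻¹' spectrum ℂ (X.map Complex.ofReal) = spectrum ℝ X := by
  ext x
  simp only [Set.mem_preimage, mem_spectrum_iff_isRoot_charpoly]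
  exact (charpoly_map X Complex.ofRealHom).symm ▸ Polynomial.isRoot_map_iff Complex.ofReal_injective

theorem Matrix.IsSymm.spectralRadius_map_ofReal {S : Matrix N N ℝ} (hS : S.IsSymm) :
    spectralRadius ℂ (S.map Complex.ofReal) = spectralRadius ℝ S := by
  have hH : (S.map Complex.ofReal).IsHermitian :=
    (isHermitian_iff_isSymm.2 hS).map _ fun x => (Complex.conj_ofReal x).symm
  have hreal : spectrum ℂ (S.map Complex.ofReal) ⊆ Set.range Complex.ofReal := by
    rw [hH.spectrum_eq_image_range]
    exact Set.image_subset_range _ _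
  rw [spectralRadius, ← Set.image_preimage_eq_of_subset hreal,
    preimage_ofReal_spectrum_map_ofReal, iSup_image]
  simp only [Complex.nnnorm_real, spectralRadius]

theorem Matrix.IsSymm.specRad_eq_l2OpNorm {S : Matrix N N ℝ} (hS : S.IsSymm) :
    specRad S = l2OpNorm S := by
  have hsa : IsSelfAdjoint (toEuclideanCLM (𝕜 := ℝ) S) := by
    rw [IsSelfAdjoint, ← map_star, star_eq_conjTranspose, conjTranspose_eq_transpose_of_trivial,
      hS.eq]
  have hspec : spectrum ℝ (toEuclideanCLM (𝕜 := ℝ) S) = spectrum ℝ S :=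
    AlgEquiv.spectrum_eq (toEuclideanCLM (𝕜 := ℝ) (n := N)).toAlgEquiv S
  rw [specRad, hS.spectralRadius_map_ofReal, spectralRadius, ← hspec, ← spectralRadius,
    ContinuousLinearMap.spectralRadius_eq_nnnorm _ hsa, ENNReal.coe_toReal, coe_nnnorm, l2OpNorm]

end SpecRad

section L2

open scoped Matrix.Norms.L2Operator

variable {N : Type*} [Fintype N] [DecidableEq N]

theorem l2OpNorm_eq_norm (X : Matrix N N ℝ) : l2OpNorm X = ‖X‖ := rfl

theorem l2OpNorm_nonneg (X : Matrix N N ℝ) : 0 ≤ l2OpNorm X := norm_nonneg _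

theorem specRad_transpose_mul_self (M : Matrix N N ℝ) : specRad (Mᵀ * M) = l2OpNorm M ^ 2 := by
  rw [(isSymm_transpose_mul_self M).specRad_eq_l2OpNorm, l2OpNorm_eq_norm, l2OpNorm_eq_norm, sq,
    ← conjTranspose_eq_transpose_of_trivial, l2_opNorm_conjTranspose_mul_self]

theorem specRad_transpose_mul_self_mul_transpose_mul_self (A B : Matrix N N ℝ) :
    specRad (Aᵀ * A * (Bᵀ * B)) = l2OpNorm (A * Bᵀ) ^ 2 := by
  rw [← Matrix.mul_assoc, specRad_mul_comm, ← specRad_transpose_mul_self, transpose_mul,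
    transpose_transpose]
  simp only [Matrix.mul_assoc]

theorem l2OpNorm_mul_transpose_le (A B : Matrix N N ℝ) :
    l2OpNorm (A * Bᵀ) ≤ l2OpNorm A * l2OpNorm B := by
  simp only [l2OpNorm_eq_norm]
  rw [← l2_opNorm_conjTranspose B, conjTranspose_eq_transpose_of_trivial]
  exact l2_opNorm_mul A Bᵀ

end L2

section Hadamard

variable {N : Type*}

theorem hadPow_half_hadamard_apply {X : Matrix N N ℝ} (Y : Matrix N N ℝ) (hX : ∀ i j, 0 ≤ X i j)
    (i j : N) : (hadPow X (1 / 2) ⊙ hadPow Y (1 / 2)) i j = √(X i j * Y i j) := by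
  rw [hadamard_apply, Real.sqrt_mul (hX i j), Real.sqrt_eq_rpow, Real.sqrt_eq_rpow]
  rfl

theorem hadPow_half_hadamard_nonneg {X : Matrix N N ℝ} (Y : Matrix N N ℝ) (hX : ∀ i j, 0 ≤ X i j) :
    ∀ i j, 0 ≤ (hadPow X (1 / 2) ⊙ hadPow Y (1 / 2)) i j := fun i j => by
  rw [hadPow_half_hadamard_apply _ hX]
  positivity

variable [Fintype N]

theorem hadPow_half_hadamard_mul_apply_le {X Y Z W : Matrix N N ℝ} (hX : ∀ i j, 0 ≤ X i j)
    (hY : ∀ i j, 0 ≤ Y i j) (hZ : ∀ i j, 0 ≤ Z i j) (hW : ∀ i j, 0 ≤ W i j) :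
    ∀ i j, ((hadPow X (1 / 2) ⊙ hadPow Y (1 / 2)) * (hadPow Z (1 / 2) ⊙ hadPow W (1 / 2))) i j ≤
      (hadPow (X * Z) (1 / 2) ⊙ hadPow (Y * W) (1 / 2)) i j := fun i j => by
  rw [hadPow_half_hadamard_apply _ (mul_apply_nonneg hX hZ),
    Real.sqrt_mul (mul_apply_nonneg hX hZ i j), mul_apply]
  calc ∑ k, (hadPow X (1 / 2) ⊙ hadPow Y (1 / 2)) i k * (hadPow Z (1 / 2) ⊙ hadPow W (1 / 2)) k j
      = ∑ k, √(X i k * Z k j) * √(Y i k * W k j) := by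
        refine Finset.sum_congr rfl fun k _ => ?_
        rw [hadPow_half_hadamard_apply _ hX, hadPow_half_hadamard_apply _ hZ,
          ← Real.sqrt_mul (mul_nonneg (hX i k) (hY i k)),
          ← Real.sqrt_mul (mul_nonneg (hX i k) (hZ k j))]
        ring_nf
    _ ≤ _ := Real.sum_sqrt_mul_sqrt_le _ (fun k => mul_nonneg (hX i k) (hZ k j))
        fun k => mul_nonneg (hY i k) (hW k j)

variable [DecidableEq N]

theorem hadPow_half_hadamard_pow_apply_le {Y Z : Matrix N N ℝ} (hY : ∀ i j, 0 ≤ Y i j)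
    (hZ : ∀ i j, 0 ≤ Z i j) (k : ℕ) :
    ∀ i j, ((hadPow Y (1 / 2) ⊙ hadPow Z (1 / 2)) ^ k) i j ≤
      (hadPow (Y ^ k) (1 / 2) ⊙ hadPow (Z ^ k) (1 / 2)) i j := by
  have hM := hadPow_half_hadamard_nonneg Z hY
  induction k with
  | zero =>
    intro i j
    rw [hadPow_half_hadamard_apply _ (pow_apply_nonneg hY 0)]
    by_cases h : i = j <;> simp [one_apply, h]
  | succ k ih =>
    rw [pow_succ, pow_succ, pow_succ]
    exact fun i j =>
      (mul_apply_le_mul_apply (pow_apply_nonneg hM k) ih hM (fun _ _ => le_rfl) i j).trans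
        (hadPow_half_hadamard_mul_apply_le (pow_apply_nonneg hY k) (pow_apply_nonneg hZ k)
          hY hZ i j)

theorem specRad_hadPow_half_hadamard_sq_le_mul {Y Z : Matrix N N ℝ} (hY : ∀ i j, 0 ≤ Y i j)
    (hZ : ∀ i j, 0 ≤ Z i j) :
    specRad (hadPow Y (1 / 2) ⊙ hadPow Z (1 / 2)) ^ 2 ≤ specRad Y * specRad Z := by
  refine specRad_sq_le_mul_of_pow_apply_sq_le fun k i j => ?_
  have hYk := pow_apply_nonneg hY k
  calc ((hadPow Y (1 / 2) ⊙ hadPow Z (1 / 2)) ^ k) i j ^ 2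
      ≤ (hadPow (Y ^ k) (1 / 2) ⊙ hadPow (Z ^ k) (1 / 2)) i j ^ 2 :=
        pow_le_pow_left₀ (pow_apply_nonneg (hadPow_half_hadamard_nonneg Z hY) k i j)
          (hadPow_half_hadamard_pow_apply_le hY hZ k i j) 2
    _ = |(Y ^ k) i j| * |(Z ^ k) i j| := by
        rw [hadPow_half_hadamard_apply _ hYk,
          Real.sq_sqrt (mul_nonneg (hYk i j) (pow_apply_nonneg hZ k i j)),
          abs_of_nonneg (hYk i j), abs_of_nonneg (pow_apply_nonneg hZ k i j)]

theorem l2OpNorm_hadPow_half_hadamard_sq_le {A B : Matrix N N ℝ} (hA : ∀ i j, 0 ≤ A i j)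
    (hB : ∀ i j, 0 ≤ B i j) :
    l2OpNorm (hadPow A (1 / 2) ⊙ hadPow B (1 / 2)) ^ 2 ≤
      specRad (hadPow (Aᵀ * A) (1 / 2) ⊙ hadPow (Bᵀ * B) (1 / 2)) := by
  rw [← specRad_transpose_mul_self, transpose_hadamard]
  exact specRad_le_specRad_of_le
    (mul_apply_nonneg (fun i j => hadPow_half_hadamard_nonneg _ hA j i)
      (hadPow_half_hadamard_nonneg _ hA))
    (hadPow_half_hadamard_mul_apply_le (fun i j => hA j i) (fun i j => hB j i) hA hB)

theorem specRad_hadPow_half_hadamard_sq_le_mul_comm {C D : Matrix N N ℝ} (hC : ∀ i j, 0 ≤ C i j)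
    (hD : ∀ i j, 0 ≤ D i j) :
    specRad (hadPow C (1 / 2) ⊙ hadPow D (1 / 2)) ^ 2 ≤
      specRad (hadPow (C * D) (1 / 2) ⊙ hadPow (D * C) (1 / 2)) := by
  have hR := hadPow_half_hadamard_nonneg D hC
  refine (specRad_sq_le_specRad_mul_self _).trans
    (specRad_le_specRad_of_le (mul_apply_nonneg hR hR) ?_)
  nth_rewrite 2 [hadamard_comm]
  exact hadPow_half_hadamard_mul_apply_le hC hD hD hC

theorem specRad_hadPow_half_hadamard_mul_le {C D : Matrix N N ℝ} (hC : ∀ i j, 0 ≤ C i j)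
    (hD : ∀ i j, 0 ≤ D i j) :
    specRad (hadPow (C * D) (1 / 2) ⊙ hadPow (D * C) (1 / 2)) ≤ specRad (C * D) := by
  have h := specRad_hadPow_half_hadamard_sq_le_mul (mul_apply_nonneg hC hD)
    (mul_apply_nonneg hD hC)
  rw [specRad_mul_comm D C, ← sq] at h
  exact (pow_le_pow_iff_left₀ (specRad_nonneg _) (specRad_nonneg _) two_ne_zero).1 h

end Hadamard

theorem stmt12 {N : Type*} [Fintype N] [DecidableEq N] (A B : Matrix N N ℝ)
    (hA : ∀ i j, 0 ≤ A i j) (hB : ∀ i j, 0 ≤ B i j) :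
    l2OpNorm (hadPow A (1/2) ⊙ hadPow B (1/2)) ≤
        specRad (hadPow (Aᵀ * A) (1/2) ⊙ hadPow (Bᵀ * B) (1/2)) ^ ((1 : ℝ) / 2) ∧
      specRad (hadPow (Aᵀ * A) (1/2) ⊙ hadPow (Bᵀ * B) (1/2)) ^ ((1 : ℝ) / 2) ≤
        specRad (hadPow (Aᵀ * A * (Bᵀ * B)) (1/2) ⊙ hadPow (Bᵀ * B * (Aᵀ * A)) (1/2)) ^ ((1 : ℝ) / 4) ∧
      specRad (hadPow (Aᵀ * A * (Bᵀ * B)) (1/2) ⊙ hadPow (Bᵀ * B * (Aᵀ * A)) (1/2)) ^ ((1 : ℝ) / 4) ≤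
        specRad (Aᵀ * A * (Bᵀ * B)) ^ ((1 : ℝ) / 4) ∧
      specRad (Aᵀ * A * (Bᵀ * B)) ^ ((1 : ℝ) / 4) = l2OpNorm (A * Bᵀ) ^ ((1 : ℝ) / 2) ∧
      l2OpNorm (A * Bᵀ) ^ ((1 : ℝ) / 2) ≤ l2OpNorm A ^ ((1 : ℝ) / 2) * l2OpNorm B ^ ((1 : ℝ) / 2) := by
  have hAA := mul_apply_nonneg (fun i j => hA j i) hA
  have hBB := mul_apply_nonneg (fun i j => hB j i) hB
  have quarter : (1 : ℝ) / 4 = 1 / 2 / 2 := by norm_num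
  refine ⟨?_, ?_, ?_, ?_, ?_⟩
  · simpa using Real.rpow_le_rpow_div_two_of_sq_le (l2OpNorm_nonneg _) zero_le_one
      (l2OpNorm_hadPow_half_hadamard_sq_le hA hB)
  · rw [quarter]
    exact Real.rpow_le_rpow_div_two_of_sq_le (specRad_nonneg _) (by norm_num)
      (specRad_hadPow_half_hadamard_sq_le_mul_comm hAA hBB)
  · exact Real.rpow_le_rpow (specRad_nonneg _) (specRad_hadPow_half_hadamard_mul_le hAA hBB)
      (by norm_num)
  · rw [specRad_transpose_mul_self_mul_transpose_mul_self, quarter,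
      Real.sq_rpow_div_two (l2OpNorm_nonneg _)]
  · rw [← Real.mul_rpow (l2OpNorm_nonneg A) (l2OpNorm_nonneg B)]
    exact Real.rpow_le_rpow (l2OpNorm_nonneg _) (l2OpNorm_mul_transpose_le A B) (by norm_num)
end

section
/- Let A and B be nonnegative n×n real matrices and α ≥ 1/2. Then ‖A^{(α)} ∘ B^{(α)}‖ ≤ ρ((AᵀB)^{(α)} ∘ (BᵀA)^{(α)})^{1/2} ≤ ρ(AᵀB)^α, where ‖·‖ is the Euclidean operator norm. -/
/-!
Write `C = A^(α) ∘ B^(α)`, `M = AᵀB` and `D = M^(α) ∘ (Mᵀ)^(α)`. Cauchy–Schwarz together with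
the superadditivity of `t ↦ t^(2α)` for `2α ≥ 1` gives `CᵀC ≤ D` entrywise. Both
matrices are nonnegative and `D` is symmetric, so `‖C‖² = ‖CᵀC‖ ≤ ‖D‖ = ρ(D)`.

For the second inequality, `D_ij = √(E_ij E_ji)` with `E = M^(2α)`. The same two inequalities,
applied inductively, give `(D^k)_ij ≤ √((E^k)_ij (E^k)_ji)` and `(E^k)_ij ≤ ((M^k)_ij)^(2α)`, hence
the Frobenius norm bounds `‖D^k‖ ≤ ‖E^k‖ ≤ ‖M^k‖^(2α)`; Gelfand's formula turns these into
`ρ(D) ≤ ρ(E) ≤ ρ(M)^(2α)`.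
-/

open Matrix

open Finset

theorem Real.sum_rpow_le_rpow_sum {ι : Type*} (s : Finset ι) {f : ι → ℝ} (hf : ∀ i, 0 ≤ f i)
    {p : ℝ} (hp : 1 ≤ p) : ∑ i ∈ s, f i ^ p ≤ (∑ i ∈ s, f i) ^ p := by
  induction s using Finset.cons_induction with
  | empty => simp [Real.zero_rpow (by linarith : p ≠ 0)]
  | cons a s _ ih =>
    rw [sum_cons, sum_cons]
    calc f a ^ p + ∑ i ∈ s, f i ^ p ≤ f a ^ p + (∑ i ∈ s, f i) ^ p := by gcongr
      _ ≤ (f a + ∑ i ∈ s, f i) ^ p :=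
        Real.add_rpow_le_rpow_add (hf a) (sum_nonneg fun i _ => hf i) hp

theorem Real.sqrt_rpow_two_mul {x : ℝ} (hx : 0 ≤ x) (a : ℝ) : √(x ^ (2 * a)) = x ^ a := by
  rw [Real.sqrt_eq_rpow, ← Real.rpow_mul hx]
  ring_nf

theorem Real.sum_rpow_mul_rpow_le {ι : Type*} (s : Finset ι) {f g : ι → ℝ} (hf : ∀ i, 0 ≤ f i)
    (hg : ∀ i, 0 ≤ g i) {α : ℝ} (hα : 1 / 2 ≤ α) :
    ∑ i ∈ s, f i ^ α * g i ^ α ≤ (∑ i ∈ s, f i) ^ α * (∑ i ∈ s, g i) ^ α := by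
  have h2α : 1 ≤ 2 * α := by linarith
  calc ∑ i ∈ s, f i ^ α * g i ^ α = ∑ i ∈ s, √(f i ^ (2 * α)) * √(g i ^ (2 * α)) := by
        simp only [Real.sqrt_rpow_two_mul (hf _), Real.sqrt_rpow_two_mul (hg _)]
    _ ≤ √(∑ i ∈ s, f i ^ (2 * α)) * √(∑ i ∈ s, g i ^ (2 * α)) :=
        Real.sum_sqrt_mul_sqrt_le s (fun i => Real.rpow_nonneg (hf i) _)
          (fun i => Real.rpow_nonneg (hg i) _)
    _ ≤ √((∑ i ∈ s, f i) ^ (2 * α)) * √((∑ i ∈ s, g i) ^ (2 * α)) := by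
        gcongr
        · exact Real.sum_rpow_le_rpow_sum s hf h2α
        · exact Real.sum_rpow_le_rpow_sum s hg h2α
    _ = (∑ i ∈ s, f i) ^ α * (∑ i ∈ s, g i) ^ α := by
        rw [Real.sqrt_rpow_two_mul (sum_nonneg fun i _ => hf i),
          Real.sqrt_rpow_two_mul (sum_nonneg fun i _ => hg i)]

section

variable {N : Type*} [Fintype N]

theorem transpose_mul_self_hadamard_hadPow_apply_le {A B : Matrix N N ℝ} (hA : ∀ i j, 0 ≤ A i j)
    (hB : ∀ i j, 0 ≤ B i j) {α : ℝ} (hα : 1 / 2 ≤ α) (i j : N) :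
    ((hadPow A α ⊙ hadPow B α)ᵀ * (hadPow A α ⊙ hadPow B α)) i j ≤
      (Aᵀ * B) i j ^ α * (Aᵀ * B) j i ^ α := by
  have hsummand : ∀ k, (hadPow A α ⊙ hadPow B α) k i * (hadPow A α ⊙ hadPow B α) k j =
      (A k i * B k j) ^ α * (B k i * A k j) ^ α := fun k => by
    simp only [hadamard_apply, hadPow, Real.mul_rpow (hA _ _) (hB _ _),
      Real.mul_rpow (hB _ _) (hA _ _)]
    ring
  simp only [mul_apply, transpose_apply, hsummand, mul_comm (A _ j)]
  exact Real.sum_rpow_mul_rpow_le _ (fun k => mul_nonneg (hA k i) (hB k j))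
    (fun k => mul_nonneg (hB k i) (hA k j)) hα

variable [DecidableEq N]

theorem pow_apply_le_sqrt_mul_pow_apply {D E : Matrix N N ℝ} (hD : ∀ i j, 0 ≤ D i j)
    (hE : ∀ i j, 0 ≤ E i j) (h : ∀ i j, D i j ≤ √(E i j * E j i)) (k : ℕ) (i j : N) :
    (D ^ k) i j ≤ √((E ^ k) i j * (E ^ k) j i) := by
  induction k generalizing i j with
  | zero =>
    by_cases hij : i = j
    · simp [hij]
    · simp [one_apply_ne hij]
  | succ k ih =>
    have hEk := pow_apply_nonneg hE k
    calc (D ^ (k + 1)) i j = ∑ l, (D ^ k) i l * D l j := by rw [pow_succ, mul_apply]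
      _ ≤ ∑ l, √((E ^ k) i l * (E ^ k) l i) * √(E l j * E j l) :=
          sum_le_sum fun l _ => mul_le_mul (ih i l) (h l j) (hD l j) (Real.sqrt_nonneg _)
      _ = ∑ l, √((E ^ k) i l * E l j) * √(E j l * (E ^ k) l i) := sum_congr rfl fun l _ => by
          rw [← Real.sqrt_mul (mul_nonneg (hEk i l) (hEk l i)),
            ← Real.sqrt_mul (mul_nonneg (hEk i l) (hE l j))]
          ring_nf
      _ ≤ √(∑ l, (E ^ k) i l * E l j) * √(∑ l, E j l * (E ^ k) l i) :=
          Real.sum_sqrt_mul_sqrt_le _ (fun l => mul_nonneg (hEk i l) (hE l j))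
            (fun l => mul_nonneg (hE j l) (hEk l i))
      _ = √((E ^ (k + 1)) i j * (E ^ (k + 1)) j i) := by
          nth_rw 2 [pow_succ']
          rw [pow_succ, mul_apply, mul_apply,
            Real.sqrt_mul (sum_nonneg fun l _ => mul_nonneg (hEk i l) (hE l j))]

theorem hadPow_pow_apply_le {M : Matrix N N ℝ} (hM : ∀ i j, 0 ≤ M i j) {β : ℝ} (hβ : 1 ≤ β)
    (k : ℕ) (i j : N) : (hadPow M β ^ k) i j ≤ (M ^ k) i j ^ β := by
  induction k generalizing i j with
  | zero =>
    by_cases hij : i = j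
    · simp [hij]
    · simp [one_apply_ne hij, Real.zero_rpow (by linarith : β ≠ 0)]
  | succ k ih =>
    have hMk := pow_apply_nonneg hM k
    calc (hadPow M β ^ (k + 1)) i j = ∑ l, (hadPow M β ^ k) i l * M l j ^ β := by
          rw [pow_succ, mul_apply]; rfl
      _ ≤ ∑ l, (M ^ k) i l ^ β * M l j ^ β :=
          sum_le_sum fun l _ => mul_le_mul_of_nonneg_right (ih i l) (Real.rpow_nonneg (hM l j) β)
      _ = ∑ l, ((M ^ k) i l * M l j) ^ β :=
          sum_congr rfl fun l _ => (Real.mul_rpow (hMk i l) (hM l j)).symm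
      _ ≤ (∑ l, (M ^ k) i l * M l j) ^ β :=
          Real.sum_rpow_le_rpow_sum _ (fun l => mul_nonneg (hMk i l) (hM l j)) hβ
      _ = (M ^ (k + 1)) i j ^ β := by rw [pow_succ, mul_apply]

theorem l2OpNorm_le_of_abs_le {X Y : Matrix N N ℝ} (h : ∀ i j, |X i j| ≤ Y i j) :
    l2OpNorm X ≤ l2OpNorm Y := by
  refine ContinuousLinearMap.opNorm_le_bound _ (norm_nonneg _) fun x => ?_
  set xabs : EuclideanSpace ℝ N := WithLp.toLp 2 fun j => |x j|
  have hentry : ∀ i, |(X *ᵥ x.ofLp) i| ≤ (Y *ᵥ xabs.ofLp) i := fun i =>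
    calc |(X *ᵥ x.ofLp) i| ≤ ∑ j, |X i j| * |x j| := by
          simpa only [mulVec, dotProduct, abs_mul] using
            abs_sum_le_sum_abs (fun j => X i j * x j) univ
      _ ≤ (Y *ᵥ xabs.ofLp) i := sum_le_sum fun j _ => by gcongr; exact h i j
  have hxabs : ‖xabs‖ = ‖x‖ := by simp [xabs, EuclideanSpace.norm_eq]
  calc ‖toEuclideanCLM (𝕜 := ℝ) X x‖ ≤ ‖toEuclideanCLM (𝕜 := ℝ) Y xabs‖ := by
        simp only [EuclideanSpace.norm_eq, ofLp_toEuclideanCLM, Real.norm_eq_abs, sq_abs]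
        refine Real.sqrt_le_sqrt (sum_le_sum fun i _ => ?_)
        exact sq_le_sq' (abs_le.mp (hentry i)).1 (abs_le.mp (hentry i)).2
    _ ≤ l2OpNorm Y * ‖x‖ := (ContinuousLinearMap.le_opNorm _ _).trans_eq (by rw [hxabs]; rfl)

open scoped Matrix.Norms.L2Operator in
theorem l2OpNorm_transpose_mul_self (X : Matrix N N ℝ) : l2OpNorm (Xᵀ * X) = l2OpNorm X ^ 2 := by
  rw [sq, l2OpNorm, l2OpNorm, l2_opNorm_toEuclideanCLM, l2_opNorm_toEuclideanCLM,
    ← conjTranspose_eq_transpose_of_trivial, l2_opNorm_conjTranspose_mul_self]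

open scoped Matrix.Norms.L2Operator in
theorem l2OpNorm_le_norm_map_ofReal (X : Matrix N N ℝ) : l2OpNorm X ≤ ‖X.map Complex.ofReal‖ := by
  refine ContinuousLinearMap.opNorm_le_bound _ (norm_nonneg _) fun x => ?_
  have hnorm : ∀ v : N → ℝ, ‖WithLp.toLp 2 (Complex.ofReal ∘ v)‖ = ‖WithLp.toLp 2 v‖ := fun v => by
    simp [EuclideanSpace.norm_eq]
  calc ‖toEuclideanCLM (𝕜 := ℝ) X x‖
      = ‖toEuclideanCLM (𝕜 := ℂ) (X.map Complex.ofReal)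
          (WithLp.toLp 2 (Complex.ofReal ∘ x.ofLp))‖ := by
        rw [toEuclideanCLM_toLp, ← hnorm]
        congr 2
        ext i
        exact Complex.ofRealHom.map_mulVec X x.ofLp i
    _ ≤ ‖X.map Complex.ofReal‖ * ‖x‖ := by
        rw [← hnorm x.ofLp]
        exact ContinuousLinearMap.le_opNorm _ _

open scoped Matrix.Norms.L2Operator in
theorem specRad_eq_norm_map_ofReal {X : Matrix N N ℝ} (hX : X.IsSymm) :
    specRad X = ‖X.map Complex.ofReal‖ := by
  have hsa : IsSelfAdjoint (X.map Complex.ofReal) := by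
    ext i j
    simp [hX.apply]
  rw [specRad, hsa.spectralRadius_eq_nnnorm]
  rfl

section Frobenius

attribute [local instance] Matrix.frobeniusSeminormedAddCommGroup
  Matrix.frobeniusNormedAddCommGroup Matrix.frobeniusNormedRing Matrix.frobeniusNormedAlgebra

theorem Matrix.frobenius_norm_le_of_norm_le {m n α : Type*} [Fintype m] [Fintype n]
    [SeminormedAddCommGroup α] {X Y : Matrix m n α} (h : ∀ i j, ‖X i j‖ ≤ ‖Y i j‖) :
    ‖X‖ ≤ ‖Y‖ := by
  rw [frobenius_norm_def, frobenius_norm_def]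
  gcongr with i _ j _
  exact h i j

theorem frobenius_norm_le_of_abs_le_sqrt_mul {X Y : Matrix N N ℝ}
    (h : ∀ i j, |X i j| ≤ √(Y i j * Y j i)) : ‖X‖ ≤ ‖Y‖ := by
  have hentry : ∀ i j, X i j ^ 2 ≤ (Y i j ^ 2 + Y j i ^ 2) / 2 := fun i j =>
    calc X i j ^ 2 = |X i j| ^ 2 := (sq_abs _).symm
      _ ≤ √(Y i j * Y j i) ^ 2 := pow_le_pow_left₀ (abs_nonneg _) (h i j) 2
      _ = max (Y i j * Y j i) 0 := Real.sq_sqrt'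
      _ ≤ (Y i j ^ 2 + Y j i ^ 2) / 2 :=
          max_le (by nlinarith [sq_nonneg (Y i j - Y j i)]) (by positivity)
  have hsum : ∑ i, ∑ j, X i j ^ 2 ≤ ∑ i, ∑ j, Y i j ^ 2 :=
    calc ∑ i, ∑ j, X i j ^ 2 ≤ ∑ i, ∑ j, (Y i j ^ 2 + Y j i ^ 2) / 2 := by
          gcongr with i _ j _; exact hentry i j
      _ = ∑ i, ∑ j, Y i j ^ 2 := by
          simp only [← sum_div, sum_add_distrib]
          rw [sum_comm (f := fun i j => Y j i ^ 2)]
          ring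
  simp only [frobenius_norm_def, Real.norm_eq_abs, Real.rpow_two, sq_abs]
  gcongr

theorem frobenius_norm_hadPow_le {X : Matrix N N ℝ} (hX : ∀ i j, 0 ≤ X i j) {β : ℝ}
    (hβ : 1 ≤ β) : ‖hadPow X β‖ ≤ ‖X‖ ^ β := by
  have hS : 0 ≤ ∑ i, ∑ j, X i j ^ 2 := by positivity
  have hsum : ∑ i, ∑ j, (X i j ^ 2) ^ β ≤ (∑ i, ∑ j, X i j ^ 2) ^ β :=
    calc ∑ i, ∑ j, (X i j ^ 2) ^ β ≤ ∑ i, (∑ j, X i j ^ 2) ^ β :=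
          sum_le_sum fun i _ => Real.sum_rpow_le_rpow_sum _ (fun j => by positivity) hβ
      _ ≤ (∑ i, ∑ j, X i j ^ 2) ^ β :=
          Real.sum_rpow_le_rpow_sum _ (fun i => by positivity) hβ
  simp only [frobenius_norm_def, hadPow, Real.norm_eq_abs, Real.rpow_two, sq_abs,
    Real.rpow_pow_comm (hX _ _)]
  calc (∑ i, ∑ j, (X i j ^ 2) ^ β) ^ (1 / 2 : ℝ)
      ≤ ((∑ i, ∑ j, X i j ^ 2) ^ β) ^ (1 / 2 : ℝ) := by gcongr
    _ = ((∑ i, ∑ j, X i j ^ 2) ^ (1 / 2 : ℝ)) ^ β := by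
        rw [← Real.rpow_mul hS, ← Real.rpow_mul hS, mul_comm]

open Filter Topology

theorem tendsto_frobenius_norm_pow_rpow_specRad (X : Matrix N N ℝ) :
    Tendsto (fun k : ℕ => ‖X ^ k‖ ^ (1 / k : ℝ)) atTop (𝓝 (specRad X)) := by
  set X' := X.map Complex.ofReal
  have hfin : spectralRadius ℂ X' ≠ ⊤ :=
    ne_top_of_le_ne_top (by simp [ENNReal.mul_ne_top])
      (spectrum.spectralRadius_le_pow_nnnorm_pow_one_div ℂ X' 0)
  refine ((ENNReal.tendsto_toReal hfin).comp
    (spectrum.pow_norm_pow_one_div_tendsto_nhds_spectralRadius X')).congr fun k => ?_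
  have hpow : X' ^ k = (X ^ k).map Complex.ofReal := (Complex.ofRealHom.mapMatrix.map_pow X k).symm
  simp [hpow, ENNReal.toReal_ofReal (Real.rpow_nonneg (norm_nonneg _) _)]

theorem specRad_le_rpow_of_frobenius_norm_pow_le {X Y : Matrix N N ℝ} {β : ℝ} (hβ : 0 ≤ β)
    (h : ∀ k : ℕ, ‖X ^ k‖ ≤ ‖Y ^ k‖ ^ β) : specRad X ≤ specRad Y ^ β := by
  refine le_of_tendsto_of_tendsto' (tendsto_frobenius_norm_pow_rpow_specRad X)
    ((tendsto_frobenius_norm_pow_rpow_specRad Y).rpow_const (Or.inr hβ)) fun k => ?_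
  calc ‖X ^ k‖ ^ (1 / k : ℝ) ≤ (‖Y ^ k‖ ^ β) ^ (1 / k : ℝ) := by gcongr; exact h k
    _ = (‖Y ^ k‖ ^ (1 / k : ℝ)) ^ β := by
        rw [← Real.rpow_mul (norm_nonneg _), ← Real.rpow_mul (norm_nonneg _), mul_comm]

theorem specRad_le_of_apply_le_sqrt_mul {D E : Matrix N N ℝ} (hD : ∀ i j, 0 ≤ D i j)
    (hE : ∀ i j, 0 ≤ E i j) (h : ∀ i j, D i j ≤ √(E i j * E j i)) : specRad D ≤ specRad E := by
  have hpow : ∀ k : ℕ, ‖D ^ k‖ ≤ ‖E ^ k‖ ^ (1 : ℝ) := fun k => by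
    rw [Real.rpow_one]
    refine frobenius_norm_le_of_abs_le_sqrt_mul fun i j => ?_
    rw [abs_of_nonneg (pow_apply_nonneg hD k i j)]
    exact pow_apply_le_sqrt_mul_pow_apply hD hE h k i j
  simpa using specRad_le_rpow_of_frobenius_norm_pow_le zero_le_one hpow

theorem specRad_hadPow_le {M : Matrix N N ℝ} (hM : ∀ i j, 0 ≤ M i j) {β : ℝ} (hβ : 1 ≤ β) :
    specRad (hadPow M β) ≤ specRad M ^ β := by
  refine specRad_le_rpow_of_frobenius_norm_pow_le (by linarith) fun k => ?_
  have hMβ : ∀ i j, 0 ≤ hadPow M β i j := fun i j => Real.rpow_nonneg (hM i j) β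
  calc ‖hadPow M β ^ k‖ ≤ ‖hadPow (M ^ k) β‖ :=
        Matrix.frobenius_norm_le_of_norm_le fun i j => by
          rw [Real.norm_of_nonneg (pow_apply_nonneg hMβ k i j)]
          exact (hadPow_pow_apply_le hM hβ k i j).trans (le_abs_self _)
    _ ≤ ‖M ^ k‖ ^ β := frobenius_norm_hadPow_le (pow_apply_nonneg hM k) hβ

end Frobenius

theorem specRad_hadamard_hadPow_transpose_le {M : Matrix N N ℝ} (hM : ∀ i j, 0 ≤ M i j) {α : ℝ}
    (hα : 1 / 2 ≤ α) : specRad (hadPow M α ⊙ hadPow Mᵀ α) ≤ specRad M ^ (2 * α) := by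
  have hentry : ∀ i j, (hadPow M α ⊙ hadPow Mᵀ α) i j =
      √(hadPow M (2 * α) i j * hadPow M (2 * α) j i) := fun i j => by
    simp only [hadamard_apply, hadPow, transpose_apply,
      Real.sqrt_mul (Real.rpow_nonneg (hM i j) _), Real.sqrt_rpow_two_mul (hM _ _)]
  refine (specRad_le_of_apply_le_sqrt_mul (fun i j => ?_) (fun i j => Real.rpow_nonneg (hM i j) _)
    fun i j => (hentry i j).le).trans (specRad_hadPow_le hM (by linarith))
  rw [hentry]
  exact Real.sqrt_nonneg _

theorem l2OpNorm_hadamard_hadPow_sq_le {A B : Matrix N N ℝ} (hA : ∀ i j, 0 ≤ A i j)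
    (hB : ∀ i j, 0 ≤ B i j) {α : ℝ} (hα : 1 / 2 ≤ α) :
    l2OpNorm (hadPow A α ⊙ hadPow B α) ^ 2 ≤
      specRad (hadPow (Aᵀ * B) α ⊙ hadPow (Aᵀ * B)ᵀ α) := by
  set C := hadPow A α ⊙ hadPow B α
  set D := hadPow (Aᵀ * B) α ⊙ hadPow (Aᵀ * B)ᵀ α
  have hC : ∀ i j, 0 ≤ C i j := fun i j =>
    mul_nonneg (Real.rpow_nonneg (hA i j) α) (Real.rpow_nonneg (hB i j) α)
  have hD : D.IsSymm := IsSymm.ext fun i j => by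
    simp only [D, hadamard_apply, hadPow, transpose_apply, mul_comm]
  calc l2OpNorm C ^ 2 = l2OpNorm (Cᵀ * C) := (l2OpNorm_transpose_mul_self C).symm
    _ ≤ l2OpNorm D := l2OpNorm_le_of_abs_le fun i j => by
        have hCC : 0 ≤ (Cᵀ * C) i j := sum_nonneg fun k _ => mul_nonneg (hC k i) (hC k j)
        rw [abs_of_nonneg hCC]
        exact transpose_mul_self_hadamard_hadPow_apply_le hA hB hα i j
    _ ≤ specRad D := (l2OpNorm_le_norm_map_ofReal D).trans (specRad_eq_norm_map_ofReal hD).ge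

end

theorem stmt14 {N : Type*} [Fintype N] [DecidableEq N] (A B : Matrix N N ℝ)
    (hA : ∀ i j, 0 ≤ A i j) (hB : ∀ i j, 0 ≤ B i j) (α : ℝ) (hα : (1:ℝ)/2 ≤ α) :
    l2OpNorm (hadPow A α ⊙ hadPow B α) ≤
        specRad (hadPow (Aᵀ * B) α ⊙ hadPow (Bᵀ * A) α) ^ ((1 : ℝ) / 2) ∧
      specRad (hadPow (Aᵀ * B) α ⊙ hadPow (Bᵀ * A) α) ^ ((1 : ℝ) / 2) ≤
        specRad (Aᵀ * B) ^ α := by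
  have hM : ∀ i j, 0 ≤ (Aᵀ * B) i j := fun i j =>
    sum_nonneg fun k _ => mul_nonneg (hA k i) (hB k j)
  have hBA : Bᵀ * A = (Aᵀ * B)ᵀ := by rw [transpose_mul, transpose_transpose]
  rw [hBA, ← Real.sqrt_eq_rpow]
  refine ⟨(le_abs_self _).trans (Real.abs_le_sqrt (l2OpNorm_hadamard_hadPow_sq_le hA hB hα)), ?_⟩
  calc √(specRad (hadPow (Aᵀ * B) α ⊙ hadPow (Aᵀ * B)ᵀ α))
      ≤ √(specRad (Aᵀ * B) ^ (2 * α)) :=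
        Real.sqrt_le_sqrt (specRad_hadamard_hadPow_transpose_le hM hα)
    _ = specRad (Aᵀ * B) ^ α := Real.sqrt_rpow_two_mul ENNReal.toReal_nonneg α
end

section
/- Let A₁, …, A_m be nonnegative n×n real matrices with m odd. Then ‖A₁^{(1/m)} ∘ ⋯ ∘ A_m^{(1/m)}‖ ≤ ρ(A₁A₂ᵀA₃A₄ᵀ ⋯ A_{m-2}A_{m-1}ᵀA_m A₁ᵀA₂A₃ᵀA₄ ⋯ A_{m-2}ᵀA_{m-1}A_mᵀ)^{1/(2m)}, where ‖·‖ is the Euclidean operator norm. -/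
open Matrix

/-- Hadamard weighted geometric mean `A₁^{(α₁)} ∘ ⋯ ∘ A_m^{(α_m)}`. -/
noncomputable def hadGeo {m : ℕ} {N : Type*} (A : Fin m → Matrix N N ℝ) (α : Fin m → ℝ) :
    Matrix N N ℝ :=
  fun i j => ∏ k, (A k i j) ^ (α k)

/-
Let `B = A₁^{(1/m)} ∘ ⋯ ∘ A_m^{(1/m)}` and let `W` be the `2m`-periodic word whose `p`-th letter
is `A_{p mod m}`, transposed for odd `p`; the matrix under `ρ` is `P = W₀ W₁ ⋯ W_{2m-1}`.
Since `B Bᵀ` is self-adjoint, `‖B‖^{2t} = ‖(B Bᵀ)^t‖`. As `m` is odd, `g ↦ 2g + p` permutes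
the residues mod `m`, so the `p`-th factor of `(B Bᵀ)^t` is the Hadamard geometric mean of the
letters `W_{2g+p}`. Hölder's inequality bounds a product of Hadamard geometric means entrywise by
the Hadamard geometric mean of the products `W_{2g} W_{2g+1} ⋯`, and by periodicity each of these
products of length `2m(s+1)` is a fixed prefix times `P^s` times a fixed suffix. In Frobenius norm
this gives `‖B‖^{2m(s+1)} ≤ D ‖P^s‖`, and Gelfand's formula turns it into `‖B‖^{2m} ≤ ρ(P)`.
-/

open Finset Filter

lemma sum_prod_rpow_le_prod_sum_rpow {ι κ : Type*} [Fintype ι] [Fintype κ]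
    (f : ι → κ → ℝ) (hf : ∀ i x, 0 ≤ f i x) {α : ι → ℝ} (hα : ∀ i, 0 ≤ α i)
    (hα1 : ∑ i, α i = 1) :
    ∑ x, ∏ i, f i x ^ α i ≤ ∏ i, (∑ x, f i x) ^ α i := by
  set T : ι → ℝ := fun i => ∑ x, f i x
  have hT : ∀ i, 0 ≤ T i := fun i => sum_nonneg fun x _ => hf i x
  have hC : 0 ≤ ∏ i, T i ^ α i := prod_nonneg fun i _ => Real.rpow_nonneg (hT i) _
  -- normalise each `f i` to total mass one (or leave it zero), then use weighted AM-GM pointwise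
  have hsplit : ∀ i x, f i x ^ α i = T i ^ α i * (f i x / T i) ^ α i := by
    intro i x
    rcases (hT i).eq_or_lt with h0 | hpos
    · have hfx : f i x = 0 := (sum_eq_zero_iff_of_nonneg fun y _ => hf i y).mp h0.symm x
        (mem_univ x)
      rw [hfx, ← h0, zero_div]
      rcases eq_or_ne (α i) 0 with hα0 | hα0
      · simp [hα0]
      · simp [Real.zero_rpow hα0]
    · rw [← Real.mul_rpow (hT i) (div_nonneg (hf i x) (hT i)), mul_div_cancel₀ _ hpos.ne']
  have hamgm : ∀ x, ∏ i, f i x ^ α i ≤ (∏ i, T i ^ α i) * ∑ i, α i * (f i x / T i) := by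
    intro x
    rw [prod_congr rfl fun i _ => hsplit i x, prod_mul_distrib]
    exact mul_le_mul_of_nonneg_left (Real.geom_mean_le_arith_mean_weighted _ _ _
      (fun i _ => hα i) hα1 fun i _ => div_nonneg (hf i x) (hT i)) hC
  have hmass : ∑ i, α i * (T i / T i) ≤ 1 :=
    hα1 ▸ sum_le_sum fun i _ => mul_le_of_le_one_right (hα i) (div_self_le_one _)
  calc ∑ x, ∏ i, f i x ^ α i
      ≤ ∑ x, (∏ i, T i ^ α i) * ∑ i, α i * (f i x / T i) := sum_le_sum fun x _ => hamgm x
    _ = (∏ i, T i ^ α i) * ∑ i, α i * (T i / T i) := by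
      simp only [← mul_sum, sum_comm (γ := κ), ← sum_div, T]
    _ ≤ ∏ i, T i ^ α i := mul_le_of_le_one_right hC hmass

lemma le_of_eventually_pow_succ_le_mul_pow {a r C : ℝ} (hr : 0 < r)
    (h : ∀ᶠ s in atTop, a ^ (s + 1) ≤ C * r ^ s) : a ≤ r := by
  by_contra! hra
  have ha : 0 < a := hr.trans hra
  have hgrow := (tendsto_pow_atTop_atTop_of_one_lt ((one_lt_div hr).mpr hra)).eventually_gt_atTop
    (C / a)
  obtain ⟨s, hs, hCs⟩ := (h.and hgrow).exists
  have hbig : C * r ^ s < a ^ (s + 1) := by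
    rw [div_pow, lt_div_iff₀ (pow_pos hr s), div_mul_eq_mul_div, div_lt_iff₀ ha] at hCs
    rwa [pow_succ]
  exact hbig.not_ge hs

lemma IsSelfAdjoint.norm_pow {E : Type*} [NormedRing E] [StarRing E] [CStarRing E] {x : E}
    (hx : IsSelfAdjoint x) {n : ℕ} (hn : n ≠ 0) : ‖x ^ n‖ = ‖x‖ ^ n := by
  refine le_antisymm (norm_pow_le' x (Nat.pos_of_ne_zero hn)) ?_
  rcases (norm_nonneg x).eq_or_lt with h0 | hpos
  · rw [← h0, zero_pow hn]
    exact norm_nonneg _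
  -- compare with the power `2 ^ n ≥ n`, where the C*-identity gives equality
  have hlt : n < 2 ^ n := Nat.lt_two_pow_self
  refine le_of_mul_le_mul_right ?_ (pow_pos hpos (2 ^ n - n))
  calc ‖x‖ ^ n * ‖x‖ ^ (2 ^ n - n) = ‖x ^ 2 ^ n‖ := by
        rw [← pow_add, Nat.add_sub_cancel' hlt.le, hx.norm_pow_two_pow]
    _ = ‖x ^ n * x ^ (2 ^ n - n)‖ := by rw [← pow_add, Nat.add_sub_cancel' hlt.le]
    _ ≤ ‖x ^ n‖ * ‖x‖ ^ (2 ^ n - n) :=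
        (norm_mul_le _ _).trans (mul_le_mul_of_nonneg_left
          (norm_pow_le' x (Nat.sub_pos_of_lt hlt)) (norm_nonneg _))

section OrderedProd

variable {M : Type*} [Monoid M]

def orderedProd (f : ℕ → M) (L : ℕ) : M := (List.ofFn fun k : Fin L => f k).prod

@[simp] lemma orderedProd_zero (f : ℕ → M) : orderedProd f 0 = 1 := rfl

lemma orderedProd_succ (f : ℕ → M) (L : ℕ) :
    orderedProd f (L + 1) = orderedProd f L * f L := by
  rw [orderedProd, List.ofFn_succ_last, List.prod_append, List.prod_singleton]
  rfl

lemma orderedProd_add (f : ℕ → M) (a b : ℕ) :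
    orderedProd f (a + b) = orderedProd f a * orderedProd (fun p => f (a + p)) b := by
  induction b with
  | zero => simp
  | succ b ih => rw [← add_assoc, orderedProd_succ, ih, orderedProd_succ, mul_assoc]

lemma orderedProd_congr {f g : ℕ → M} {L : ℕ} (h : ∀ p < L, f p = g p) :
    orderedProd f L = orderedProd g L :=
  congrArg List.prod (List.ofFn_inj.mpr (funext fun k => h k k.isLt))

lemma orderedProd_two_mul_alternating (x y : M) (t : ℕ) :
    orderedProd (fun p => if p % 2 = 1 then y else x) (2 * t) = (x * y) ^ t := by
  induction t with
  | zero => simp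
  | succ t ih =>
    rw [mul_add, orderedProd_add, ih, pow_succ]
    simp [orderedProd_succ]

lemma Function.Periodic.orderedProd_mul {f : ℕ → M} {d : ℕ} (hf : Function.Periodic f d)
    (s : ℕ) : orderedProd f (d * s) = orderedProd f d ^ s := by
  induction s with
  | zero => simp
  | succ s ih =>
    rw [mul_add, mul_one, orderedProd_add, ih, pow_succ]
    congr 1
    exact orderedProd_congr fun p _ => by simpa [add_comm, mul_comm] using (hf.nat_mul s) p

lemma Function.Periodic.orderedProd_shift {f : ℕ → M} {d : ℕ} (hf : Function.Periodic f d)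
    {e : ℕ} (he : e ≤ d) (s : ℕ) :
    orderedProd (fun p => f (e + p)) (d * (s + 1)) =
      orderedProd (fun p => f (e + p)) (d - e) * (orderedProd f d ^ s * orderedProd f e) := by
  have hlen : d * (s + 1) = (d - e) + (d * s + e) := by rw [mul_add]; omega
  have hf' : ∀ n p, f (d * n + p) = f p := fun n p => by
    simpa [add_comm, mul_comm] using (hf.nat_mul n) p
  rw [hlen, orderedProd_add]
  congr 1
  rw [orderedProd_congr (g := f) fun p _ => by
      rw [← add_assoc, Nat.add_sub_cancel' he, ← mul_one d, hf'],
    orderedProd_add, hf.orderedProd_mul, orderedProd_congr (g := f) fun p _ => hf' s p]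

end OrderedProd

lemma Function.Periodic.exists_norm_orderedProd_shift_le {R : Type*} [SeminormedRing R]
    {f : ℕ → R} {d : ℕ} (hf : Function.Periodic f d) {e : ℕ} (he : e ≤ d) :
    ∃ C, 0 ≤ C ∧ ∀ s, ‖orderedProd (fun p => f (e + p)) (d * (s + 1))‖ ≤
      C * ‖orderedProd f d ^ s‖ := by
  refine ⟨‖orderedProd (fun p => f (e + p)) (d - e)‖ * ‖orderedProd f e‖, by positivity,
    fun s => ?_⟩
  rw [hf.orderedProd_shift he]
  calc _ ≤ ‖orderedProd (fun p => f (e + p)) (d - e)‖ *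
        (‖orderedProd f d ^ s‖ * ‖orderedProd f e‖) :=
        (norm_mul_le _ _).trans (mul_le_mul_of_nonneg_left (norm_mul_le _ _) (norm_nonneg _))
    _ = _ := by ring

section Hadamard

variable {m : ℕ} {N : Type*}

lemma hadGeo_nonneg {A : Fin m → Matrix N N ℝ} (hA : ∀ k i j, 0 ≤ A k i j) (α : Fin m → ℝ)
    (i j : N) : 0 ≤ hadGeo A α i j :=
  prod_nonneg fun k _ => Real.rpow_nonneg (hA k i j) _

lemma hadGeo_comp_bijective (A : Fin m → Matrix N N ℝ) (α : Fin m → ℝ) {σ : Fin m → Fin m}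
    (hσ : Function.Bijective σ) : hadGeo (fun k => A (σ k)) (fun k => α (σ k)) = hadGeo A α := by
  funext i j
  exact Fintype.prod_bijective σ hσ _ _ fun _ => rfl

variable [Fintype N] {α : Fin m → ℝ}

lemma hadGeo_mul_hadGeo_apply_le (hα : ∀ k, 0 ≤ α k) (hα1 : ∑ k, α k = 1)
    {X Y : Fin m → Matrix N N ℝ} (hX : ∀ k i j, 0 ≤ X k i j) (hY : ∀ k i j, 0 ≤ Y k i j)
    (a b : N) : (hadGeo X α * hadGeo Y α) a b ≤ hadGeo (fun k => X k * Y k) α a b := by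
  simp only [hadGeo, Matrix.mul_apply, ← prod_mul_distrib]
  calc ∑ s, ∏ k, X k a s ^ α k * Y k s b ^ α k
      = ∑ s, ∏ k, (X k a s * Y k s b) ^ α k := by
        simp only [Real.mul_rpow (hX _ _ _) (hY _ _ _)]
    _ ≤ _ := sum_prod_rpow_le_prod_sum_rpow _ (fun k s => mul_nonneg (hX k a s) (hY k s b)) hα hα1

lemma orderedProd_nonneg [DecidableEq N] {f : ℕ → Matrix N N ℝ} (hf : ∀ p i j, 0 ≤ f p i j)
    (L : ℕ) (i j : N) : 0 ≤ orderedProd f L i j := by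
  induction L generalizing j with
  | zero => by_cases h : i = j <;> simp [h]
  | succ L ih =>
    rw [orderedProd_succ, Matrix.mul_apply]
    exact sum_nonneg fun s _ => mul_nonneg (ih s) (hf L s j)

lemma orderedProd_hadGeo_apply_le [DecidableEq N] (hα : ∀ k, 0 ≤ α k) (hα1 : ∑ k, α k = 1)
    {M : ℕ → Fin m → Matrix N N ℝ} (hM : ∀ p k i j, 0 ≤ M p k i j) (L : ℕ) (a b : N) :
    orderedProd (fun p => hadGeo (M p) α) L a b ≤
      hadGeo (fun k => orderedProd (fun p => M p k) L) α a b := by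
  induction L generalizing b with
  | zero =>
    by_cases h : a = b
    · simp [hadGeo, h]
    · rw [orderedProd_zero, Matrix.one_apply_ne h]
      exact hadGeo_nonneg (fun k => orderedProd_nonneg (fun p => hM p k) 0) α a b
  | succ L ih =>
    have hP : ∀ k i j, 0 ≤ orderedProd (fun p => M p k) L i j :=
      fun k => orderedProd_nonneg (fun p => hM p k) L
    calc orderedProd (fun p => hadGeo (M p) α) (L + 1) a b
        ≤ (hadGeo (fun k => orderedProd (fun p => M p k) L) α * hadGeo (M L) α) a b := by
          rw [orderedProd_succ, Matrix.mul_apply, Matrix.mul_apply]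
          exact sum_le_sum fun s _ =>
            mul_le_mul_of_nonneg_right (ih s) (hadGeo_nonneg (hM L) α s b)
      _ ≤ hadGeo (fun k => orderedProd (fun p => M p k) (L + 1)) α a b := by
          simpa only [orderedProd_succ] using
            hadGeo_mul_hadGeo_apply_le hα hα1 hP (hM L) a b

end Hadamard

section AlternatingWord

variable {m : ℕ} [NeZero m] {N : Type*}

def altWord (A : Fin m → Matrix N N ℝ) (p : ℕ) : Matrix N N ℝ :=
  if p % 2 = 1 then (A (Fin.ofNat m p))ᵀ else A (Fin.ofNat m p)

lemma altWord_nonneg {A : Fin m → Matrix N N ℝ} (hA : ∀ k i j, 0 ≤ A k i j) (p : ℕ) (i j : N) :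
    0 ≤ altWord A p i j := by
  unfold altWord
  split_ifs
  exacts [hA _ j i, hA _ i j]

lemma altWord_periodic (A : Fin m → Matrix N N ℝ) : Function.Periodic (altWord A) (2 * m) := by
  intro p
  have hidx : Fin.ofNat m (p + 2 * m) = Fin.ofNat m p := by ext; simp
  simp only [altWord, hidx, Nat.add_mul_mod_self_left]

lemma bijective_ofNat_two_mul_add (hm : Odd m) (p : ℕ) :
    Function.Bijective fun g : Fin m => Fin.ofNat m (2 * g + p) := by
  refine Finite.injective_iff_bijective.mp fun a b hab => Fin.ext ?_
  have hmod : (2 * a.val + p) % m = (2 * b.val + p) % m := by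
    simpa [Fin.ext_iff] using hab
  have hcop : Nat.Coprime m 2 := Nat.coprime_two_right.mpr hm
  have := Nat.ModEq.cancel_left_of_coprime hcop (Nat.ModEq.add_right_cancel' p hmod)
  rwa [Nat.ModEq, Nat.mod_eq_of_lt a.isLt, Nat.mod_eq_of_lt b.isLt] at this

lemma mul_transpose_hadGeo_pow [Fintype N] [DecidableEq N] (hm : Odd m)
    (A : Fin m → Matrix N N ℝ) (c : ℝ) (t : ℕ) :
    (hadGeo A (fun _ => c) * (hadGeo A (fun _ => c))ᵀ) ^ t =
      orderedProd (fun p => hadGeo (fun g : Fin m => altWord A (2 * g + p)) (fun _ => c))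
        (2 * t) := by
  rw [← orderedProd_two_mul_alternating]
  refine orderedProd_congr fun p _ => ?_
  have hword : ∀ g : Fin m, altWord A (2 * g + p) =
      (fun k => if p % 2 = 1 then (A k)ᵀ else A k) (Fin.ofNat m (2 * g + p)) := fun g => by
    simp only [altWord, Nat.mul_add_mod_self_left]
  simp only [hword]
  rw [hadGeo_comp_bijective (fun k => if p % 2 = 1 then (A k)ᵀ else A k) (fun _ : Fin m => c)
    (bijective_ofNat_two_mul_add hm p)]
  split_ifs <;> rfl

lemma list_prod_eq_orderedProd_altWord [Fintype N] [DecidableEq N] (hm : Odd m)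
    (A : Fin m → Matrix N N ℝ) :
    (List.ofFn fun k : Fin m => if k.val % 2 = 1 then (A k)ᵀ else A k).prod *
        (List.ofFn fun k : Fin m => if k.val % 2 = 0 then (A k)ᵀ else A k).prod =
      orderedProd (altWord A) (2 * m) := by
  rw [two_mul, orderedProd_add]
  congr 1
  · exact congrArg List.prod (List.ofFn_inj.mpr (funext fun k => by simp [altWord]))
  · refine congrArg List.prod (List.ofFn_inj.mpr (funext fun k => ?_))
    have hpar : (m + k.val) % 2 = 1 ↔ k.val % 2 = 0 := by
      have := Nat.odd_iff.mp hm
      omega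
    have hidx : Fin.ofNat m (m + k.val) = k := by ext; simp [Nat.mod_eq_of_lt k.isLt]
    simp only [altWord, hidx, hpar]

end AlternatingWord

section L2Operator

open scoped Matrix.Norms.L2Operator

lemma l2OpNorm_pow_two_mul {N : Type*} [Fintype N] [DecidableEq N] (B : Matrix N N ℝ) {t : ℕ}
    (ht : t ≠ 0) : l2OpNorm B ^ (2 * t) = l2OpNorm ((B * Bᵀ) ^ t) := by
  have hstar : star B = Bᵀ := by
    rw [Matrix.star_eq_conjTranspose, Matrix.conjTranspose_eq_transpose_of_trivial]
  change ‖B‖ ^ (2 * t) = ‖(B * Bᵀ) ^ t‖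
  rw [← hstar, (IsSelfAdjoint.mul_star_self B).norm_pow ht, CStarRing.norm_self_mul_star, pow_mul,
    sq]

end L2Operator

section Frobenius

attribute [local instance] Matrix.frobeniusNormedAddCommGroup Matrix.frobeniusNormedSpace
  Matrix.frobeniusNormedRing Matrix.frobeniusNormedAlgebra

variable {N : Type*} [Fintype N]

lemma frobenius_norm_sq_eq {ι : Type*} [Fintype ι] (A : Matrix ι N ℝ) :
    ‖A‖ ^ 2 = ∑ i, ∑ j, A i j ^ 2 := by
  have hsum : 0 ≤ ∑ i, ∑ j, A i j ^ 2 := by positivity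
  simp only [Matrix.frobenius_norm_def, Real.rpow_two, Real.norm_eq_abs, sq_abs]
  rw [← Real.sqrt_eq_rpow, Real.sq_sqrt hsum]

lemma frobenius_norm_le_of_le {X Y : Matrix N N ℝ} (hX : ∀ i j, 0 ≤ X i j)
    (h : ∀ i j, X i j ≤ Y i j) : ‖X‖ ≤ ‖Y‖ := by
  refine (pow_le_pow_iff_left₀ (norm_nonneg X) (norm_nonneg Y) two_ne_zero).mp ?_
  simp only [frobenius_norm_sq_eq]
  gcongr with i _ j _
  exacts [hX i j, h i j]

lemma frobenius_norm_hadGeo_le {m : ℕ} {α : Fin m → ℝ} (hα : ∀ k, 0 ≤ α k)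
    (hα1 : ∑ k, α k = 1) {X : Fin m → Matrix N N ℝ} (hX : ∀ k i j, 0 ≤ X k i j) :
    ‖hadGeo X α‖ ≤ ∏ k, ‖X k‖ ^ α k := by
  refine (pow_le_pow_iff_left₀ (norm_nonneg _)
    (prod_nonneg fun k _ => Real.rpow_nonneg (norm_nonneg _) _) two_ne_zero).mp ?_
  calc ‖hadGeo X α‖ ^ 2
      = ∑ p : N × N, ∏ k, (X k p.1 p.2 ^ 2) ^ α k := by
        simp only [frobenius_norm_sq_eq, hadGeo, ← prod_pow, Real.rpow_pow_comm (hX _ _ _),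
          Fintype.sum_prod_type]
    _ ≤ ∏ k, (∑ p : N × N, X k p.1 p.2 ^ 2) ^ α k :=
        sum_prod_rpow_le_prod_sum_rpow _ (fun k p => sq_nonneg _) hα hα1
    _ = (∏ k, ‖X k‖ ^ α k) ^ 2 := by
        simp only [← prod_pow, Real.rpow_pow_comm (norm_nonneg _), frobenius_norm_sq_eq,
          Fintype.sum_prod_type]

lemma l2OpNorm_le_frobenius_norm [DecidableEq N] (A : Matrix N N ℝ) : l2OpNorm A ≤ ‖A‖ := by
  refine ContinuousLinearMap.opNorm_le_bound _ (norm_nonneg A) fun x => ?_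
  calc ‖Matrix.toEuclideanCLM (𝕜 := ℝ) A x‖
      = ‖A * Matrix.replicateCol Unit (WithLp.ofLp x)‖ := by
        rw [← Matrix.replicateCol_mulVec, Matrix.frobenius_norm_replicateCol]
        rfl
    _ ≤ ‖A‖ * ‖x‖ := by
        simpa using Matrix.frobenius_norm_mul A (Matrix.replicateCol Unit (WithLp.ofLp x))

lemma eventually_frobenius_norm_pow_le [DecidableEq N] (P : Matrix N N ℝ) {r : ℝ}
    (hr : specRad P < r) : ∀ᶠ n in atTop, ‖P ^ n‖ ≤ r ^ n := by
  set Q := P.map Complex.ofReal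
  have hQ : spectralRadius ℂ Q ≠ ⊤ := by
    refine ne_top_of_le_ne_top ?_ (spectrum.spectralRadius_le_pow_nnnorm_pow_one_div ℂ Q 0)
    finiteness
  have hlt : spectralRadius ℂ Q < ENNReal.ofReal r := (ENNReal.lt_ofReal_iff_toReal_lt hQ).mpr hr
  filter_upwards [(spectrum.pow_norm_pow_one_div_tendsto_nhds_spectralRadius Q).eventually
    (gt_mem_nhds hlt), eventually_ne_atTop 0] with n hn hn0
  have hroot : ‖Q ^ n‖ ^ (1 / n : ℝ) ≤ r :=
    (ENNReal.ofReal_le_ofReal_iff (hr.le.trans' ENNReal.toReal_nonneg)).mp hn.le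
  have hnorm : ‖Q ^ n‖ = ‖P ^ n‖ := by
    rw [show Q ^ n = (P ^ n).map Complex.ofReal from (Matrix.map_pow P Complex.ofRealHom n).symm]
    exact Matrix.frobenius_norm_map_eq _ _ fun x => Complex.norm_real x
  rw [← hnorm, ← Real.rpow_inv_natCast_pow (norm_nonneg _) hn0, ← one_div]
  exact pow_le_pow_left₀ (Real.rpow_nonneg (norm_nonneg _) _) hroot n

lemma le_specRad_of_pow_succ_le [DecidableEq N] {P : Matrix N N ℝ}
    {a D : ℝ} (hD : 0 ≤ D) (h : ∀ s, a ^ (s + 1) ≤ D * ‖P ^ s‖) : a ≤ specRad P := by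
  refine le_of_forall_gt_imp_ge_of_dense fun r hr => ?_
  refine le_of_eventually_pow_succ_le_mul_pow (C := D) (ENNReal.toReal_nonneg.trans_lt hr) ?_
  filter_upwards [eventually_frobenius_norm_pow_le P hr] with s hs
  exact (h s).trans (mul_le_mul_of_nonneg_left hs hD)

lemma exists_l2OpNorm_hadGeo_pow_le [DecidableEq N] {m : ℕ} [NeZero m] (hm : Odd m)
    {A : Fin m → Matrix N N ℝ} (hA : ∀ k i j, 0 ≤ A k i j) :
    ∃ D, 0 ≤ D ∧ ∀ s, (l2OpNorm (hadGeo A (fun _ => (1 : ℝ) / m)) ^ (2 * m)) ^ (s + 1) ≤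
      D * ‖orderedProd (altWord A) (2 * m) ^ s‖ := by
  set α : Fin m → ℝ := fun _ => (1 : ℝ) / m
  have hα : ∀ k, 0 ≤ α k := fun _ => by positivity
  have hα1 : ∑ k, α k = 1 := by simp [α, NeZero.ne m]
  set B := hadGeo A α
  set P := orderedProd (altWord A) (2 * m)
  have hW : ∀ (g : Fin m) L i j, 0 ≤ orderedProd (fun p => altWord A (2 * g + p)) L i j :=
    fun g => orderedProd_nonneg fun p => altWord_nonneg hA _
  choose C hC0 hC using fun g : Fin m =>
    (altWord_periodic A).exists_norm_orderedProd_shift_le (e := 2 * g) (by omega)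
  refine ⟨∏ g, C g ^ ((1 : ℝ) / m), prod_nonneg fun g _ => Real.rpow_nonneg (hC0 g) _,
    fun s => ?_⟩
  calc (l2OpNorm B ^ (2 * m)) ^ (s + 1)
      = l2OpNorm ((B * Bᵀ) ^ (m * (s + 1))) := by
        rw [← pow_mul, mul_assoc,
          l2OpNorm_pow_two_mul B (mul_ne_zero (NeZero.ne m) s.succ_ne_zero)]
    _ ≤ ‖(B * Bᵀ) ^ (m * (s + 1))‖ := l2OpNorm_le_frobenius_norm _
    _ ≤ ‖hadGeo (fun g => orderedProd (fun p => altWord A (2 * g + p)) (2 * m * (s + 1))) α‖ := by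
        rw [mul_transpose_hadGeo_pow hm, ← mul_assoc]
        exact frobenius_norm_le_of_le
          (orderedProd_nonneg (fun p => hadGeo_nonneg (fun g => altWord_nonneg hA _) α) _)
          (orderedProd_hadGeo_apply_le hα hα1 (fun p g => altWord_nonneg hA _) _)
    _ ≤ ∏ g : Fin m, ‖orderedProd (fun p => altWord A (2 * g + p)) (2 * m * (s + 1))‖ ^ α g :=
        frobenius_norm_hadGeo_le hα hα1 fun g => hW g _
    _ ≤ ∏ g, (C g * ‖P ^ s‖) ^ ((1 : ℝ) / m) :=
        prod_le_prod (fun g _ => Real.rpow_nonneg (norm_nonneg _) _)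
          fun g _ => Real.rpow_le_rpow (norm_nonneg _) (hC g s) (hα g)
    _ = (∏ g, C g ^ ((1 : ℝ) / m)) * ‖P ^ s‖ := by
        rw [prod_congr rfl fun g _ => Real.mul_rpow (hC0 g) (norm_nonneg _), prod_mul_distrib,
          prod_const, card_univ, Fintype.card_fin, one_div,
          Real.rpow_inv_natCast_pow (norm_nonneg _) (NeZero.ne m)]

end Frobenius

theorem stmt16_general {m : ℕ} (hmo : Odd m) {N : Type*} [Fintype N] [DecidableEq N]
    (A : Fin m → Matrix N N ℝ) (hA : ∀ k, ∀ i j, 0 ≤ A k i j) :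
    l2OpNorm (hadGeo A (fun _ => (1 : ℝ) / m)) ≤
      specRad ((List.ofFn fun k : Fin m => if k.val % 2 = 1 then (A k)ᵀ else A k).prod *
          (List.ofFn fun k : Fin m => if k.val % 2 = 0 then (A k)ᵀ else A k).prod) ^
        ((1 : ℝ) / (2 * m)) := by
  have : NeZero m := ⟨hmo.pos.ne'⟩
  obtain ⟨D, hD, hpow⟩ := exists_l2OpNorm_hadGeo_pow_le hmo hA
  have hle := le_specRad_of_pow_succ_le hD hpow
  rw [list_prod_eq_orderedProd_altWord hmo A]
  have h2m : (0 : ℝ) < 2 * m := by have := hmo.pos; positivity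
  rw [one_div (2 * (m : ℝ)), Real.le_rpow_inv_iff_of_pos (by exact norm_nonneg _)
    (by exact ENNReal.toReal_nonneg) h2m]
  exact_mod_cast hle

theorem stmt16 {m : ℕ} (hm : 0 < m) (hmo : Odd m) {N : Type*} [Fintype N] [DecidableEq N]
    (A : Fin m → Matrix N N ℝ) (hA : ∀ k, ∀ i j, 0 ≤ A k i j) :
    l2OpNorm (hadGeo A (fun _ => (1 : ℝ) / m)) ≤
      specRad ((List.ofFn fun k : Fin m => if k.val % 2 = 1 then (A k)ᵀ else A k).prod *
          (List.ofFn fun k : Fin m => if k.val % 2 = 0 then (A k)ᵀ else A k).prod) ^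
        ((1 : ℝ) / (2 * m)) :=
  stmt16_general hmo A hA
end

section
/- There exist nonnegative 2×2 real matrices A and B such that ‖A ∘ B ∘ A‖ > ‖ABA‖; for instance A with rows (0,1),(0,1) and B with rows (1,1),(0,0) give ‖A ∘ B ∘ A‖ = 1 while ABA = 0. -/
open Matrix

set_option synthInstance.maxHeartbeats 1000000 in
set_option maxHeartbeats 1000000 in
lemma l2OpNorm_example : l2OpNorm (!![0, 1; 0, 0] : Matrix (Fin 2) (Fin 2) ℝ) = 1 := by
  unfold l2OpNorm
  set M : Matrix (Fin 2) (Fin 2) ℝ := !![0, 1; 0, 0] with hM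
  set T := Matrix.toEuclideanCLM (𝕜 := ℝ) M with hT
  set P : Matrix (Fin 2) (Fin 2) ℝ := !![0, 0; 0, 1] with hPd
  have hP : star M * M = P := by
    ext i j
    fin_cases i <;> fin_cases j <;>
      simp [hM, hPd, Matrix.star_eq_conjTranspose, Matrix.mul_apply, Fin.sum_univ_two,
        Matrix.conjTranspose_apply]
  have hPP : P * P = P := by
    ext i j
    fin_cases i <;> fin_cases j <;> simp [hPd, Matrix.mul_apply, Fin.sum_univ_two]
  have hPstar : star P = P := by
    ext i j
    fin_cases i <;> fin_cases j <;>
      simp [hPd, Matrix.star_eq_conjTranspose, Matrix.conjTranspose_apply]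
  set Q := Matrix.toEuclideanCLM (𝕜 := ℝ) P with hQ
  have hQne : Q ≠ 0 := by
    intro h
    have : P = 0 := by
      have h2 := congrArg (Matrix.toEuclideanCLM (𝕜 := ℝ)).symm (hQ ▸ h)
      simpa using h2
    have := congrFun (congrFun this 1) 1
    simp [hPd] at this
  have hQnorm : ‖Q‖ = 1 := by
    have h1 : ‖Q‖ * ‖Q‖ = ‖Q‖ := by
      rw [← CStarRing.norm_star_mul_self (x := Q), ← map_star, ← _root_.map_mul, hPstar, hPP]
    have h2 : 0 < ‖Q‖ := norm_pos_iff.mpr hQne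
    nlinarith
  have hTT : ‖T‖ * ‖T‖ = 1 := by
    rw [← CStarRing.norm_star_mul_self (x := T), ← map_star, ← _root_.map_mul, hP, ← hQ, hQnorm]
  nlinarith [norm_nonneg T]

theorem stmt19 :
    ∃ A B : Matrix (Fin 2) (Fin 2) ℝ, (∀ i j, 0 ≤ A i j) ∧ (∀ i j, 0 ≤ B i j) ∧
      l2OpNorm (A ⊙ B ⊙ A) > l2OpNorm (A * B * A) ∧
      A = !![0, 1; 0, 1] ∧ B = !![1, 1; 0, 0] ∧
      l2OpNorm (A ⊙ B ⊙ A) = 1 ∧ A * B * A = 0 := by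
  refine ⟨!![0, 1; 0, 1], !![1, 1; 0, 0], ?_, ?_, ?_, rfl, rfl, ?_, ?_⟩
  · intro i j; fin_cases i <;> fin_cases j <;> norm_num
  · intro i j; fin_cases i <;> fin_cases j <;> norm_num
  · have h1 : (!![0, 1; 0, 1] : Matrix (Fin 2) (Fin 2) ℝ) ⊙ !![1, 1; 0, 0] ⊙ !![0, 1; 0, 1]
        = !![0, 1; 0, 0] := by
      ext i j; fin_cases i <;> fin_cases j <;> simp [Matrix.hadamard]
    have h2 : (!![0, 1; 0, 1] : Matrix (Fin 2) (Fin 2) ℝ) * !![1, 1; 0, 0] * !![0, 1; 0, 1]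
        = 0 := by
      ext i j; fin_cases i <;> fin_cases j <;>
        simp [Matrix.mul_apply, Fin.sum_univ_two]
    rw [h1, h2, l2OpNorm_example]
    have : l2OpNorm (0 : Matrix (Fin 2) (Fin 2) ℝ) = 0 := by
      unfold l2OpNorm; rw [map_zero]; simp
    rw [this]; norm_num
  · have h1 : (!![0, 1; 0, 1] : Matrix (Fin 2) (Fin 2) ℝ) ⊙ !![1, 1; 0, 0] ⊙ !![0, 1; 0, 1]
        = !![0, 1; 0, 0] := by
      ext i j; fin_cases i <;> fin_cases j <;> simp [Matrix.hadamard]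
    rw [h1, l2OpNorm_example]
  · ext i j; fin_cases i <;> fin_cases j <;>
      simp [Matrix.mul_apply, Fin.sum_univ_two]
end
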